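/- arXiv:1401.0933 — 2 statements merged into one kernel-verified Lean document; each statement's English description precedes it below -/
import Mathlib

section
/- There is a constant C such that for all n ≥ i ≥ 1, |Γ(i)Γ(n+1/2)/(Γ(n)Γ(i+1/2)) − √(n/i)| ≤ C·√(n/i)/i. -/
open Real Set

lemma midpoint_logGamma {a b : ℝ} (ha : 0 < a) (hb : 0 < b) :
    Real.Gamma ((a + b) / 2) ≤ Real.sqrt (Real.Gamma a * Real.Gamma b) := by
  have h := Real.convexOn_log_Gamma.2 (mem_Ioi.2 ha) (mem_Ioi.2 hb)
    (by norm_num : (0:ℝ) ≤ 1/2) (by norm_num : (0:ℝ) ≤ 1/2) (by norm_num)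
  simp only [smul_eq_mul, Function.comp_apply] at h
  have hmid : (1/2:ℝ) * a + (1/2:ℝ) * b = (a+b)/2 := by ring
  rw [hmid] at h
  have hga := Real.Gamma_pos_of_pos ha
  have hgb := Real.Gamma_pos_of_pos hb
  have hgm := Real.Gamma_pos_of_pos (by linarith : (0:ℝ) < (a+b)/2)
  have hlog : Real.log (Real.Gamma ((a+b)/2)) ≤ Real.log (Real.sqrt (Real.Gamma a * Real.Gamma b)) := by
    rw [Real.log_sqrt (by positivity), Real.log_mul hga.ne' hgb.ne']
    linarith
  have := Real.exp_le_exp.mpr hlog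
  rwa [Real.exp_log hgm, Real.exp_log (Real.sqrt_pos.mpr (by positivity))] at this

lemma gammaA {x : ℝ} (hx : 0 < x) :
    Real.Gamma (x + 1/2) ≤ Real.sqrt x * Real.Gamma x := by
  have h := midpoint_logGamma hx (by linarith : (0:ℝ) < x + 1)
  have heq : (x + (x+1))/2 = x + 1/2 := by ring
  rw [heq, Real.Gamma_add_one hx.ne'] at h
  have hg := Real.Gamma_pos_of_pos hx
  calc Real.Gamma (x + 1/2) ≤ Real.sqrt (Real.Gamma x * (x * Real.Gamma x)) := h
    _ = Real.sqrt x * Real.Gamma x := by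
        rw [show Real.Gamma x * (x * Real.Gamma x) = x * (Real.Gamma x)^2 by ring,
          Real.sqrt_mul hx.le, Real.sqrt_sq hg.le]

lemma gammaB {x : ℝ} (hx : 0 < x) :
    x * Real.Gamma x ≤ Real.sqrt (x + 1/2) * Real.Gamma (x + 1/2) := by
  have h12 : (0:ℝ) < x + 1/2 := by linarith
  have h := midpoint_logGamma h12 (by linarith : (0:ℝ) < x + 3/2)
  have heq : (x + 1/2 + (x + 3/2))/2 = x + 1 := by ring
  have heq2 : (x:ℝ) + 3/2 = (x + 1/2) + 1 := by ring
  rw [heq, heq2, Real.Gamma_add_one h12.ne', Real.Gamma_add_one hx.ne'] at h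
  have hg := Real.Gamma_pos_of_pos h12
  calc x * Real.Gamma x
      ≤ Real.sqrt (Real.Gamma (x+1/2) * ((x+1/2) * Real.Gamma (x+1/2))) := h
    _ = Real.sqrt (x+1/2) * Real.Gamma (x+1/2) := by
        rw [show Real.Gamma (x+1/2) * ((x+1/2) * Real.Gamma (x+1/2))
            = (x+1/2) * (Real.Gamma (x+1/2))^2 by ring,
          Real.sqrt_mul h12.le, Real.sqrt_sq hg.le]

lemma gamma_ratio_real {x y : ℝ} (hx : 1 ≤ x) (hxy : x ≤ y) :
    |Real.Gamma x * Real.Gamma (y + 1/2) / (Real.Gamma y * Real.Gamma (x + 1/2)) -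
      Real.sqrt (y / x)| ≤ Real.sqrt (y / x) / x := by
  have px : (0:ℝ) < x := by linarith
  have py : (0:ℝ) < y := by linarith
  have hy1 : (1:ℝ) ≤ y := le_trans hx hxy
  have gx := Real.Gamma_pos_of_pos px
  have gy := Real.Gamma_pos_of_pos py
  have gx2 := Real.Gamma_pos_of_pos (by linarith : (0:ℝ) < x + 1/2)
  have gy2 := Real.Gamma_pos_of_pos (by linarith : (0:ℝ) < y + 1/2)
  have hden : (0:ℝ) < Real.Gamma y * Real.Gamma (x + 1/2) := by positivity
  have hs : Real.sqrt (y/x) = Real.sqrt y / Real.sqrt x := Real.sqrt_div py.le x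
  have sx : (0:ℝ) < Real.sqrt x := Real.sqrt_pos.mpr px
  have sy : (0:ℝ) ≤ Real.sqrt y := Real.sqrt_nonneg y
  have sx12 : (0:ℝ) < Real.sqrt (x + 1/2) := Real.sqrt_pos.mpr (by linarith)
  have sy12 : (0:ℝ) < Real.sqrt (y + 1/2) := Real.sqrt_pos.mpr (by linarith)
  have h1x : 1 - 1/x ≥ 0 := by
    have : 1/x ≤ 1 := by rw [div_le_one px]; exact hx
    linarith
  -- scalar bound 1 : sqrt y * (1 - 1/x) ≤ y / sqrt (y+1/2)
  have scalar1 : Real.sqrt y * (1 - 1/x) ≤ y / Real.sqrt (y + 1/2) := by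
    rw [le_div_iff₀ sy12]
    have hsy : Real.sqrt y * Real.sqrt (y+1/2) = Real.sqrt (y*(y+1/2)) :=
      (Real.sqrt_mul py.le _).symm
    have hu0 : (0:ℝ) ≤ Real.sqrt (y*(y+1/2)) := Real.sqrt_nonneg _
    have hu : Real.sqrt (y*(y+1/2)) ≤ y + 1/4 := by
      have h2 : y*(y+1/2) ≤ (y + 1/4)^2 := by nlinarith
      calc Real.sqrt (y*(y+1/2)) ≤ Real.sqrt ((y+1/4)^2) := Real.sqrt_le_sqrt h2
        _ = y + 1/4 := Real.sqrt_sq (by linarith)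
    have e : Real.sqrt y * (1 - 1/x) * Real.sqrt (y+1/2)
        = Real.sqrt (y*(y+1/2)) * (1 - 1/x) := by rw [← hsy]; ring
    rw [e]
    have step1 : Real.sqrt (y*(y+1/2)) * (1 - 1/x) ≤ Real.sqrt (y*(y+1/2)) * (1 - 1/y) := by
      have : 1/y ≤ 1/x := one_div_le_one_div_of_le px hxy
      exact mul_le_mul_of_nonneg_left (by linarith) hu0
    have step2 : Real.sqrt (y*(y+1/2)) * (1 - 1/y) ≤ y := by
      have h1y : 0 ≤ 1 - 1/y := by
        have : 1/y ≤ 1 := by rw [div_le_one py]; exact hy1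
        linarith
      have := mul_le_mul_of_nonneg_right hu h1y
      have expand : (y + 1/4) * (1 - 1/y) = y - 3/4 - (1/4) * (1/y) := by
        field_simp; ring
      have hpos : (0:ℝ) < (1/4) * (1/y) := by positivity
      linarith
    linarith
  -- scalar bound 2 : sqrt x * sqrt (x+1/2) ≤ x + 1
  have hv : Real.sqrt x * Real.sqrt (x+1/2) ≤ x + 1 := by
    rw [← Real.sqrt_mul px.le]
    have h2 : x*(x+1/2) ≤ (x + 1)^2 := by nlinarith
    calc Real.sqrt (x*(x+1/2)) ≤ Real.sqrt ((x+1)^2) := Real.sqrt_le_sqrt h2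
      _ = x + 1 := Real.sqrt_sq (by linarith)
  -- lower product inequality
  have lowpt : (Real.sqrt (y/x) - Real.sqrt (y/x)/x) * (Real.Gamma y * Real.Gamma (x+1/2))
      ≤ Real.Gamma x * Real.Gamma (y+1/2) := by
    have e1 : Real.sqrt (y/x) - Real.sqrt (y/x)/x = (Real.sqrt y / Real.sqrt x) * (1 - 1/x) := by
      rw [hs]; ring
    rw [e1]
    have c0 : 0 ≤ (Real.sqrt y / Real.sqrt x) * (1 - 1/x) := by
      apply mul_nonneg (by positivity) h1x
    calc (Real.sqrt y / Real.sqrt x) * (1 - 1/x) * (Real.Gamma y * Real.Gamma (x+1/2))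
        ≤ (Real.sqrt y / Real.sqrt x) * (1 - 1/x) * (Real.Gamma y * (Real.sqrt x * Real.Gamma x)) :=
          mul_le_mul_of_nonneg_left
            (mul_le_mul_of_nonneg_left (gammaA px) gy.le) c0
      _ = (Real.sqrt y * (1 - 1/x)) * (Real.Gamma y * Real.Gamma x) := by
          field_simp
      _ ≤ (y / Real.sqrt (y+1/2)) * (Real.Gamma y * Real.Gamma x) :=
          mul_le_mul_of_nonneg_right scalar1 (by positivity)
      _ = (y * Real.Gamma y / Real.sqrt (y+1/2)) * Real.Gamma x := by ring
      _ ≤ Real.Gamma (y+1/2) * Real.Gamma x := by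
          apply mul_le_mul_of_nonneg_right _ gx.le
          rw [div_le_iff₀ sy12]
          exact (gammaB py).trans (le_of_eq (mul_comm _ _))
      _ = Real.Gamma x * Real.Gamma (y+1/2) := mul_comm _ _
  -- upper product inequality
  have highpt : Real.Gamma x * Real.Gamma (y+1/2)
      ≤ (Real.sqrt (y/x) + Real.sqrt (y/x)/x) * (Real.Gamma y * Real.Gamma (x+1/2)) := by
    have e2 : Real.sqrt (y/x) + Real.sqrt (y/x)/x = (Real.sqrt y / Real.sqrt x) * (1 + 1/x) := by
      rw [hs]; ring
    rw [e2]
    have hscalar2 : Real.sqrt y ≤ Real.sqrt y * (x+1) / (Real.sqrt x * Real.sqrt (x+1/2)) := by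
      rw [le_div_iff₀ (by positivity)]
      exact mul_le_mul_of_nonneg_left hv sy
    have hBx : x * Real.Gamma x / Real.sqrt (x+1/2) ≤ Real.Gamma (x+1/2) := by
      rw [div_le_iff₀ sx12]
      exact (gammaB px).trans (le_of_eq (mul_comm _ _))
    calc Real.Gamma x * Real.Gamma (y+1/2)
        ≤ Real.Gamma x * (Real.sqrt y * Real.Gamma y) :=
          mul_le_mul_of_nonneg_left (gammaA py) gx.le
      _ = Real.sqrt y * (Real.Gamma x * Real.Gamma y) := by ring
      _ ≤ (Real.sqrt y * (x+1) / (Real.sqrt x * Real.sqrt (x+1/2))) *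
            (Real.Gamma x * Real.Gamma y) :=
          mul_le_mul_of_nonneg_right hscalar2 (by positivity)
      _ = (Real.sqrt y / Real.sqrt x) * (1 + 1/x) *
            (Real.Gamma y * (x * Real.Gamma x / Real.sqrt (x+1/2))) := by
          field_simp
      _ ≤ (Real.sqrt y / Real.sqrt x) * (1 + 1/x) *
            (Real.Gamma y * Real.Gamma (x+1/2)) := by
          apply mul_le_mul_of_nonneg_left (mul_le_mul_of_nonneg_left hBx gy.le)
          positivity
  have hlow := (le_div_iff₀ hden).mpr lowpt
  have hhigh := (div_le_iff₀ hden).mpr highpt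
  rw [abs_le]
  constructor <;> linarith

/-- There is a constant `C` such that for all `n ≥ i ≥ 1`,
`|Γ(i)Γ(n+1/2)/(Γ(n)Γ(i+1/2)) − √(n/i)| ≤ C·√(n/i)/i`. -/
theorem gamma_ratio_asymptotics :
    ∃ C : ℝ, ∀ i n : ℕ, 1 ≤ i → i ≤ n →
      |Real.Gamma i * Real.Gamma (n + 1 / 2) /
          (Real.Gamma n * Real.Gamma (i + 1 / 2)) -
        Real.sqrt ((n : ℝ) / i)| ≤ C * Real.sqrt ((n : ℝ) / i) / i := by
  refine ⟨1, fun i n hi hin => ?_⟩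
  rw [one_mul]
  exact gamma_ratio_real (by exact_mod_cast hi) (by exact_mod_cast hin)
end

section
/- For the urn with replacement matrix rows (1, 1), (0, 2) starting from (a_0, b_0) with t_0 = a_0 + b_0, and with [y]_m = y(y−1)⋯(y−m+1), one has ∑_{x=0}^{m} binom(x+a_0−1, x)·∑_{i=0}^{x}(−1)^i binom(x,i)·[m+(b_0−i)/2−1]_m/[m+t_0/2−1]_m = 1. -/
/-- The falling factorial `y(y−1)⋯(y−m+1)` for real `y`. -/
noncomputable def fallingReal (y : ℝ) (m : ℕ) : ℝ :=
  ∏ j ∈ Finset.range m, (y - j)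

open Finset Polynomial
/-- Rising-type factorial with step 1 on `c/2`. -/
noncomputable def Qr (c : ℝ) (m : ℕ) : ℝ := ∏ j ∈ Finset.range m, (c / 2 + j)

lemma Qr_succ (c : ℝ) (m : ℕ) : Qr c (m + 1) = Qr c m * (c / 2 + m) := by
  unfold Qr; rw [Finset.prod_range_succ]

lemma falling_eq (c : ℝ) (m : ℕ) :
    (∏ j ∈ Finset.range m, ((m : ℝ) + c / 2 - 1 - j)) = Qr c m := by
  unfold Qr
  rw [← Finset.prod_range_reflect (fun j => c / 2 + (j : ℝ)) m]
  apply Finset.prod_congr rfl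
  intro j hj
  have hjm : j < m := Finset.mem_range.mp hj
  have : ((m - 1 - j : ℕ) : ℝ) = (m : ℝ) - 1 - j := by
    have : m - 1 - j = m - (1 + j) := by omega
    rw [this, Nat.cast_sub (by omega)]
    push_cast; ring
  simp only [this]; ring

/-- One step of finite differencing for alternating binomial sums. -/
lemma diff_step (f : ℕ → ℝ) (n : ℕ) :
    ∑ i ∈ Finset.range (n + 2), (-1 : ℝ) ^ i * ((n + 1).choose i) * f i
      = ∑ i ∈ Finset.range (n + 1), (-1 : ℝ) ^ i * (n.choose i) * (f i - f (i + 1)) := by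
  have h1 : ∑ i ∈ Finset.range (n + 1), (-1 : ℝ) ^ i * (n.choose i) * (f i - f (i + 1))
      = (∑ i ∈ Finset.range (n + 1), (-1 : ℝ) ^ i * (n.choose i) * f i)
        - ∑ i ∈ Finset.range (n + 1), (-1 : ℝ) ^ i * (n.choose i) * f (i + 1) := by
    rw [← Finset.sum_sub_distrib]; exact Finset.sum_congr rfl fun i _ => by ring
  rw [h1, Finset.sum_range_succ' (fun i => (-1 : ℝ) ^ i * ((n + 1).choose i) * f i) (n + 1),
    Finset.sum_range_succ' (fun i => (-1 : ℝ) ^ i * (n.choose i) * f i) n]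
  have h2 : ∑ i ∈ Finset.range n, (-1 : ℝ) ^ (i + 1) * (n.choose (i + 1)) * f (i + 1)
      = ∑ i ∈ Finset.range (n + 1), (-1 : ℝ) ^ (i + 1) * (n.choose (i + 1)) * f (i + 1) := by
    rw [Finset.sum_range_succ, Nat.choose_succ_self]; simp
  rw [h2, add_sub_right_comm, ← Finset.sum_sub_distrib]
  simp only [pow_zero, Nat.choose_zero_right, Nat.cast_one, one_mul]
  have h3 : ∀ i ∈ Finset.range (n + 1),
      (-1 : ℝ) ^ (i + 1) * ((n + 1).choose (i + 1)) * f (i + 1)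
        = (-1 : ℝ) ^ (i + 1) * (n.choose (i + 1)) * f (i + 1)
          - (-1 : ℝ) ^ i * (n.choose i) * f (i + 1) := by
    intro i _
    rw [Nat.choose_succ_succ n i]
    push_cast; ring
  rw [Finset.sum_congr rfl h3]


/-- The `(n+1)`-st alternating binomial sum of a polynomial of degree `≤ n` vanishes. -/
lemma altsum_poly : ∀ (n : ℕ) (P : Polynomial ℝ), P.natDegree ≤ n →
    ∑ i ∈ Finset.range (n + 2), (-1 : ℝ) ^ i * ((n + 1).choose i) * P.eval (i : ℝ) = 0 := by
  intro n
  induction n with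
  | zero =>
    intro P hP
    obtain ⟨c, rfl⟩ := Polynomial.natDegree_eq_zero.mp (Nat.le_zero.mp hP)
    simp [Finset.sum_range_succ]
  | succ n ih =>
    intro P hP
    have hstep := diff_step (fun i => P.eval (i : ℝ)) (n + 1)
    rw [hstep]
    set Q : Polynomial ℝ := P - P.comp (X + C 1) with hQ
    have heval : ∀ i : ℕ, P.eval (i : ℝ) - P.eval ((i + 1 : ℕ) : ℝ) = Q.eval (i : ℝ) := by
      intro i
      simp [hQ, Polynomial.eval_comp]
    have hcompdeg : (P.comp (X + C 1)).natDegree = P.natDegree := by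
      rw [Polynomial.natDegree_comp, Polynomial.natDegree_X_add_C, mul_one]
    have hQdeg : Q.natDegree ≤ n := by
      rcases le_or_gt P.natDegree n with h | h
      · exact le_trans (Polynomial.natDegree_sub_le _ _) (by rw [hcompdeg]; omega)
      · have hPd : P.natDegree = n + 1 := le_antisymm hP h
        have hPne : P ≠ 0 := fun h0 => by simp [h0] at hPd
        have hlt : Q.degree < P.degree := by
          apply Polynomial.degree_sub_lt
          · rw [Polynomial.degree_eq_natDegree hPne,
              Polynomial.degree_eq_natDegree (fun h0 => by
                rw [h0] at hcompdeg; simp at hcompdeg; omega), hcompdeg]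
          · exact hPne
          · rw [Polynomial.leadingCoeff_comp (by rw [Polynomial.natDegree_X_add_C]; omega),
              (Polynomial.monic_X_add_C (1 : ℝ)).leadingCoeff, one_pow, mul_one]
        rcases eq_or_ne Q 0 with h0 | h0
        · simp [h0]
        · have := (Polynomial.natDegree_lt_iff_degree_lt h0).mpr
            (by rw [Polynomial.degree_eq_natDegree hPne, hPd] at hlt; exact_mod_cast hlt)
          omega
    have := ih Q hQdeg
    rw [← this]
    exact Finset.sum_congr rfl fun i _ => by rw [heval i]

noncomputable def Dd (b : ℝ) (m x : ℕ) : ℝ :=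
  ∑ i ∈ Finset.range (x + 1), (-1 : ℝ) ^ i * (x.choose i) * Qr (b - i) m

lemma Dd_vanish (b : ℝ) (m : ℕ) : Dd b m (m + 1) = 0 := by
  unfold Dd
  set P : Polynomial ℝ := ∏ j ∈ Finset.range m, (C (b / 2 + j) - C (2⁻¹ : ℝ) * X) with hP
  have hdeg : P.natDegree ≤ m := by
    refine le_trans (Polynomial.natDegree_prod_le _ _) ?_
    calc ∑ j ∈ Finset.range m, (C (b / 2 + (j : ℝ)) - C (2⁻¹ : ℝ) * X).natDegree
        ≤ ∑ _j ∈ Finset.range m, 1 := by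
          refine Finset.sum_le_sum fun j _ => ?_
          refine le_trans (Polynomial.natDegree_sub_le _ _) ?_
          simp only [Polynomial.natDegree_sub_le, Polynomial.natDegree_C, max_le_iff,
            Nat.zero_le, true_and]
          exact le_trans (Polynomial.natDegree_C_mul_le _ _) (by simp)
      _ = m := by simp
  have heval : ∀ i : ℕ, P.eval (i : ℝ) = Qr (b - i) m := by
    intro i
    rw [hP, Polynomial.eval_prod]
    unfold Qr
    exact Finset.prod_congr rfl fun j _ => by simp; ring
  have := altsum_poly m P hdeg
  rw [← this]
  exact Finset.sum_congr rfl fun i _ => by rw [heval i]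

lemma Dd_step0 (b : ℝ) (m : ℕ) : Dd b (m + 1) 0 = (b / 2 + m) * Dd b m 0 := by
  unfold Dd
  simp [Qr_succ]
  ring

lemma Dd_step (b : ℝ) (m x : ℕ) :
    Dd b (m + 1) (x + 1)
      = (b + 2 * m - (x + 1)) / 2 * Dd b m (x + 1) + ((x : ℝ) + 1) / 2 * Dd b m x := by
  have hx : Dd b m x = ∑ i ∈ Finset.range (x + 2), (-1 : ℝ) ^ i * (x.choose i) * Qr (b - i) m := by
    unfold Dd
    rw [Finset.sum_range_succ (fun i => (-1 : ℝ) ^ i * (x.choose i) * Qr (b - i) m) (x + 1)]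
    simp [Nat.choose_succ_self]
  rw [hx]
  unfold Dd
  rw [Finset.mul_sum, Finset.mul_sum, ← Finset.sum_add_distrib]
  refine Finset.sum_congr rfl fun i hi => ?_
  have hile : i ≤ x + 1 := Nat.lt_succ_iff.mp (Finset.mem_range.mp hi)
  have hc : ((x.choose i : ℝ)) * ((x : ℝ) + 1) = ((x + 1).choose i : ℝ) * ((x : ℝ) + 1 - i) := by
    have h := Nat.choose_mul_succ_eq x i
    have hcast : ((x + 1 - i : ℕ) : ℝ) = (x : ℝ) + 1 - i := by
      rw [Nat.cast_sub (by omega)]; push_cast; ring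
    have := congrArg (fun t : ℕ => (t : ℝ)) h
    push_cast at this
    rw [← hcast]; exact_mod_cast h
  rw [Qr_succ]
  linear_combination (-((-1 : ℝ) ^ i) * Qr (b - i) m / 2) * hc

lemma key_sum (a : ℕ) (ha : 0 < a) (b : ℝ) :
    ∀ m : ℕ, ∑ x ∈ Finset.range (m + 1), ((x + a - 1).choose x : ℝ) * Dd b m x
      = Qr ((a : ℝ) + b) m := by
  intro m
  induction m with
  | zero => simp [Dd, Qr]
  | succ m ih =>
    have hchoose : ∀ x : ℕ, ((x + 1 + a - 1).choose (x + 1) : ℝ) * ((x : ℝ) + 1)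
        = ((x : ℝ) + a) * ((x + a - 1).choose x : ℝ) := by
      intro x
      have h := Nat.add_one_mul_choose_eq (x + a - 1) x
      have h1 : x + a - 1 + 1 = x + a := by omega
      have h2 : x + 1 + a - 1 = x + a := by omega
      rw [h1] at h
      rw [h2]
      exact_mod_cast (congrArg (fun t : ℕ => (t : ℝ)) h).symm
    rw [Finset.sum_range_succ'
      (fun x => ((x + a - 1).choose x : ℝ) * Dd b (m + 1) x) (m + 1)]
    simp only [Dd_step, Dd_step0]
    have hsplit : ∑ s ∈ Finset.range (m + 1),
        ((s + 1 + a - 1).choose (s + 1) : ℝ) *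
          ((b + 2 * m - (s + 1)) / 2 * Dd b m (s + 1) + ((s : ℝ) + 1) / 2 * Dd b m s)
        = (∑ s ∈ Finset.range (m + 1),
            ((s + 1 + a - 1).choose (s + 1) : ℝ) * ((b + 2 * m - (s + 1)) / 2) * Dd b m (s + 1))
          + ∑ s ∈ Finset.range (m + 1),
            ((s + 1 + a - 1).choose (s + 1) : ℝ) * (((s : ℝ) + 1) / 2) * Dd b m s := by
      rw [← Finset.sum_add_distrib]; exact Finset.sum_congr rfl fun s _ => by ring
    rw [hsplit]
    have hS1 : (∑ s ∈ Finset.range (m + 1),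
        ((s + 1 + a - 1).choose (s + 1) : ℝ) * ((b + 2 * m - (s + 1)) / 2) * Dd b m (s + 1))
          + ((0 + a - 1).choose 0 : ℝ) * ((b + 2 * m - 0) / 2) * Dd b m 0
        = ∑ x ∈ Finset.range (m + 1),
            ((x + a - 1).choose x : ℝ) * ((b + 2 * m - x) / 2) * Dd b m x := by
      have hrefl := Finset.sum_range_succ'
        (fun x => ((x + a - 1).choose x : ℝ) * ((b + 2 * m - x) / 2) * Dd b m x) (m + 1)
      rw [Finset.sum_range_succ
        (fun x => ((x + a - 1).choose x : ℝ) * ((b + 2 * m - x) / 2) * Dd b m x) (m + 1),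
        Dd_vanish] at hrefl
      simp only [mul_zero, add_zero] at hrefl
      push_cast at hrefl ⊢
      linarith [hrefl]
    have halg : ∀ x ∈ Finset.range (m + 1),
        ((x + a - 1).choose x : ℝ) * ((b + 2 * m - x) / 2) * Dd b m x
          + ((x + 1 + a - 1).choose (x + 1) : ℝ) * (((x : ℝ) + 1) / 2) * Dd b m x
        = (((a : ℝ) + b) / 2 + m) * (((x + a - 1).choose x : ℝ) * Dd b m x) := by
      intro x _
      linear_combination (Dd b m x / 2) * hchoose x
    calc
      (∑ s ∈ Finset.range (m + 1),
          ((s + 1 + a - 1).choose (s + 1) : ℝ) * ((b + 2 * m - (s + 1)) / 2) * Dd b m (s + 1))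
        + (∑ s ∈ Finset.range (m + 1),
            ((s + 1 + a - 1).choose (s + 1) : ℝ) * (((s : ℝ) + 1) / 2) * Dd b m s)
        + ((0 + a - 1).choose 0 : ℝ) * ((b / 2 + m) * Dd b m 0)
          = (∑ x ∈ Finset.range (m + 1),
              ((x + a - 1).choose x : ℝ) * ((b + 2 * m - x) / 2) * Dd b m x)
            + ∑ s ∈ Finset.range (m + 1),
              ((s + 1 + a - 1).choose (s + 1) : ℝ) * (((s : ℝ) + 1) / 2) * Dd b m s := by
            rw [← hS1]; ring
      _ = ∑ x ∈ Finset.range (m + 1),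
            (((a : ℝ) + b) / 2 + m) * (((x + a - 1).choose x : ℝ) * Dd b m x) := by
            rw [← Finset.sum_add_distrib]
            exact Finset.sum_congr rfl halg
      _ = Qr ((a : ℝ) + b) (m + 1) := by
            rw [← Finset.mul_sum, ih, Qr_succ]; ring

/-- For the urn with `α = 1`, `σ = 2`, the exact degree probabilities sum to one:
`∑_{x=0}^{m} binom(x+a₀−1,x)·∑_{i=0}^{x}(−1)ⁱ binom(x,i)·[m+(b₀−i)/2−1]_m/[m+t₀/2−1]_m = 1`. -/
theorem urn_probabilities_sum_to_one (a₀ b₀ m : ℕ) (ha : 0 < a₀) (hb : 0 < b₀) :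
    ∑ x ∈ Finset.range (m + 1),
      ((x + a₀ - 1).choose x : ℝ) *
        ∑ i ∈ Finset.range (x + 1),
          (-1 : ℝ) ^ i * (x.choose i : ℝ) *
            (fallingReal ((m : ℝ) + ((b₀ : ℝ) - i) / 2 - 1) m /
              fallingReal ((m : ℝ) + ((a₀ + b₀ : ℕ) : ℝ) / 2 - 1) m) = 1 := by
  have key := key_sum a₀ ha (b₀ : ℝ) m
  have hQt : Qr ((a₀ : ℝ) + (b₀ : ℝ)) m ≠ 0 := by
    unfold Qr
    apply ne_of_gt
    apply Finset.prod_pos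
    intro j _
    have h1 : (1 : ℝ) ≤ (a₀ : ℝ) := by exact_mod_cast ha
    have h2 : (0 : ℝ) ≤ (b₀ : ℝ) := Nat.cast_nonneg _
    have h3 : (0 : ℝ) ≤ (j : ℝ) := Nat.cast_nonneg _
    linarith
  have hfall : ∀ c : ℝ, fallingReal ((m : ℝ) + c / 2 - 1) m = Qr c m := by
    intro c; unfold fallingReal; exact falling_eq c m
  have hcast : ((a₀ + b₀ : ℕ) : ℝ) = (a₀ : ℝ) + (b₀ : ℝ) := by push_cast; ring
  have hLHS : ∑ x ∈ Finset.range (m + 1),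
      ((x + a₀ - 1).choose x : ℝ) *
        ∑ i ∈ Finset.range (x + 1),
          (-1 : ℝ) ^ i * (x.choose i : ℝ) *
            (fallingReal ((m : ℝ) + ((b₀ : ℝ) - i) / 2 - 1) m /
              fallingReal ((m : ℝ) + ((a₀ + b₀ : ℕ) : ℝ) / 2 - 1) m)
      = (∑ x ∈ Finset.range (m + 1), ((x + a₀ - 1).choose x : ℝ) * Dd (b₀ : ℝ) m x)
          / Qr ((a₀ : ℝ) + (b₀ : ℝ)) m := by
    rw [Finset.sum_div]
    refine Finset.sum_congr rfl fun x _ => ?_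
    rw [mul_div_assoc]
    congr 1
    unfold Dd
    rw [Finset.sum_div]
    refine Finset.sum_congr rfl fun i _ => ?_
    rw [hfall ((b₀ : ℝ) - i), hcast, hfall ((a₀ : ℝ) + (b₀ : ℝ))]
    ring
  rw [hLHS, key, div_self hQt]
end
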